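/- arXiv:1306.4093 — 6 statements merged into one kernel-verified Lean document; each statement's English description precedes it below -/
import Mathlib

section
/- Let X and Y be complex Banach spaces and let T ∈ L(X,Y). If S₁, S₂ ∈ L(Y,X) both satisfy T Sᵢ T = T, Sᵢ T Sᵢ = Sᵢ, and both Sᵢ T ∈ L(X) and T Sᵢ ∈ L(Y) are hermitian operators (i = 1, 2), then S₁ = S₂; that is, the Moore-Penrose inverse of an operator between Banach spaces is unique when it exists. -/
/-!
For an idempotent `P`, `exp (i π P) = 1 - 2P`, so a hermitian idempotent satisfies `‖1 - 2P‖ = 1`.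
If `P`, `Q` are such idempotents with the same range (`PQ = Q`, `QP = P`), then `N = 2(Q - P)`
squares to zero and `(1 - 2P)(1 - 2Q) = 1 + N` is a contraction; as `(1 + N)ⁿ = 1 + nN`, this
forces `N = 0`. Idempotents with the same kernel are handled through `1 - P`, `1 - Q`.
For two Moore–Penrose inverses, the `Sᵢ T` are hermitian idempotents with a common kernel and the
`T Sᵢ` ones with a common range, hence `S₁ = S₁ T S₁ = S₂ T S₂ = S₂`.
-/

noncomputable section

open ContinuousLinearMap

/-- An operator `H` on a complex normed space is *hermitian* if `‖exp (i t H)‖ = 1`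
for all real `t`. -/
def IsHermitianOp {X : Type*} [NormedAddCommGroup X] [NormedSpace ℂ X]
    (H : X →L[ℂ] X) : Prop :=
  ∀ t : ℝ, ‖NormedSpace.exp ((Complex.I * (t : ℂ)) • H)‖ = 1

/-- `S` is a Moore–Penrose inverse of `T`: `TST = T`, `STS = S`, and `ST`, `TS` are hermitian. -/
def IsMPInv {X Y : Type*} [NormedAddCommGroup X] [NormedSpace ℂ X]
    [NormedAddCommGroup Y] [NormedSpace ℂ Y] (T : X →L[ℂ] Y) (S : Y →L[ℂ] X) : Prop :=
  T ∘L (S ∘L T) = T ∧ S ∘L (T ∘L S) = S ∧ IsHermitianOp (S ∘L T) ∧ IsHermitianOp (T ∘L S)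

open NormedSpace in
theorem IsIdempotentElem.exp_smul {𝕂 A : Type*} [RCLike 𝕂] [NormedRing A] [NormedAlgebra 𝕂 A]
    [CompleteSpace A] {P : A} (hP : IsIdempotentElem P) (c : 𝕂) :
    exp (c • P) = 1 - P + exp c • P := by
  have hsum : HasSum (fun n => ((n.factorial⁻¹ : 𝕂) • c ^ n) • P + if n = 0 then 1 - P else 0)
      (exp c • P + (1 - P)) :=
    ((exp_series_hasSum_exp' (𝕂 := 𝕂) c).smul_const P).add (hasSum_ite_eq 0 (1 - P))
  rw [add_comm (1 - P)]
  refine (exp_series_hasSum_exp' (𝕂 := 𝕂) (c • P)).unique (hsum.congr_fun fun n => ?_)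
  rcases n with _ | n
  · simp
  · simp [smul_pow, hP.pow_succ_eq, smul_smul]

theorem eq_zero_of_mul_self_eq_zero_of_norm_one_add_le_one {A : Type*} [NormedRing A]
    [NormedSpace ℝ A] {N : A} (hN : N * N = 0) (h1 : ‖1 + N‖ ≤ 1) : N = 0 := by
  have hpow (n : ℕ) : (1 + N) ^ n = 1 + n • N := by
    induction n with
    | zero => simp
    | succ n ih =>
      simp only [pow_succ, ih, add_mul, mul_add, one_mul, mul_one, smul_mul_assoc, hN, smul_zero,
        succ_nsmul]
      abel
  have hbound (n : ℕ) : n * ‖N‖ ≤ 1 + ‖(1 : A)‖ := by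
    rcases Nat.eq_zero_or_pos n with rfl | hn
    · simp only [Nat.cast_zero, zero_mul]; positivity
    have hle : ‖(1 + N) ^ n‖ ≤ 1 := (norm_pow_le' _ hn).trans (pow_le_one₀ (norm_nonneg _) h1)
    calc n * ‖N‖ = ‖(1 + N) ^ n - 1‖ := by
          rw [hpow, add_sub_cancel_left, RCLike.norm_nsmul ℝ, nsmul_eq_mul]
      _ ≤ ‖(1 + N) ^ n‖ + ‖(1 : A)‖ := norm_sub_le _ _
      _ ≤ 1 + ‖(1 : A)‖ := by gcongr
  by_contra hne
  obtain ⟨n, hn⟩ := exists_nat_gt ((1 + ‖(1 : A)‖) / ‖N‖)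
  rw [div_lt_iff₀ (norm_pos_iff.mpr hne)] at hn
  linarith [hbound n]

namespace IsIdempotentElem

variable {A : Type*} [NormedRing A] [NormedSpace ℝ A] {P Q : A}

theorem eq_of_mul_eq_right_of_norm_one_sub_two_mul_le (hP : IsIdempotentElem P)
    (hQ : IsIdempotentElem Q) (hP₁ : ‖1 - 2 * P‖ ≤ 1) (hQ₁ : ‖1 - 2 * Q‖ ≤ 1)
    (hPQ : P * Q = Q) (hQP : Q * P = P) : P = Q := by
  have hprod : (1 - 2 * P) * (1 - 2 * Q) = 1 + 2 * (Q - P) :=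
    calc (1 - 2 * P) * (1 - 2 * Q) = 1 - 2 * P - 2 * Q + 4 * (P * Q) := by noncomm_ring
      _ = 1 + 2 * (Q - P) := by rw [hPQ]; noncomm_ring
  have hsq : (2 * (Q - P)) * (2 * (Q - P)) = 0 :=
    calc (2 * (Q - P)) * (2 * (Q - P)) = 4 * (Q * Q - Q * P - P * Q + P * P) := by noncomm_ring
      _ = 0 := by rw [hP.eq, hQ.eq, hPQ, hQP]; noncomm_ring
  have hzero := eq_zero_of_mul_self_eq_zero_of_norm_one_add_le_one hsq <| by
    rw [← hprod]
    exact (norm_mul_le _ _).trans (mul_le_one₀ hP₁ (norm_nonneg _) hQ₁)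
  rw [two_mul, ← two_smul ℝ, smul_eq_zero, sub_eq_zero] at hzero
  exact (hzero.resolve_left two_ne_zero).symm

theorem eq_of_mul_eq_left_of_norm_one_sub_two_mul_le (hP : IsIdempotentElem P)
    (hQ : IsIdempotentElem Q) (hP₁ : ‖1 - 2 * P‖ ≤ 1) (hQ₁ : ‖1 - 2 * Q‖ ≤ 1)
    (hPQ : P * Q = P) (hQP : Q * P = Q) : P = Q := by
  have hcompl {R : A} (hR : ‖1 - 2 * R‖ ≤ 1) : ‖1 - 2 * (1 - R)‖ ≤ 1 := by
    rwa [show (1 : A) - 2 * (1 - R) = -(1 - 2 * R) by noncomm_ring, norm_neg]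
  have hcompl_eq := eq_of_mul_eq_right_of_norm_one_sub_two_mul_le hP.one_sub hQ.one_sub
    (hcompl hP₁) (hcompl hQ₁) (by simp only [sub_mul, mul_sub, one_mul, mul_one, hPQ]; abel)
    (by simp only [sub_mul, mul_sub, one_mul, mul_one, hQP]; abel)
  exact sub_right_injective hcompl_eq

end IsIdempotentElem

theorem IsHermitianOp.norm_one_sub_two_mul_eq_one {X : Type*} [NormedAddCommGroup X]
    [NormedSpace ℂ X] [CompleteSpace X] {P : X →L[ℂ] X} (hP : IsHermitianOp P)
    (hPP : IsIdempotentElem P) : ‖1 - 2 * P‖ = 1 := by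
  have h := hP Real.pi
  rwa [hPP.exp_smul, ← Complex.exp_eq_exp_ℂ, mul_comm, Complex.exp_pi_mul_I, neg_one_smul,
    ← sub_eq_add_neg, sub_sub, ← two_mul] at h

namespace ContinuousLinearMap

variable {X Y : Type*} [NormedAddCommGroup X] [NormedSpace ℂ X]
  [NormedAddCommGroup Y] [NormedSpace ℂ Y] {T : X →L[ℂ] Y}

theorem comp_mul_comp_eq_left {S' : Y →L[ℂ] X} (h : T ∘L (S' ∘L T) = T) (S : Y →L[ℂ] X) :
    (S ∘L T) * (S' ∘L T) = S ∘L T := by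
  rw [mul_def, comp_assoc, h]

theorem comp_mul_comp_eq_right {S : Y →L[ℂ] X} (h : T ∘L (S ∘L T) = T) (S' : Y →L[ℂ] X) :
    (T ∘L S) * (T ∘L S') = T ∘L S' := by
  rw [mul_def, ← comp_assoc, comp_assoc T S T, h]

end ContinuousLinearMap

/-- The Moore–Penrose inverse of a Banach space operator is unique when it exists. -/
theorem mpInv_unique {X Y : Type*}
    [NormedAddCommGroup X] [NormedSpace ℂ X] [CompleteSpace X]
    [NormedAddCommGroup Y] [NormedSpace ℂ Y] [CompleteSpace Y]
    (T : X →L[ℂ] Y) (S₁ S₂ : Y →L[ℂ] X)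
    (h₁ : IsMPInv T S₁) (h₂ : IsMPInv T S₂) : S₁ = S₂ := by
  obtain ⟨hTST₁, hSTS₁, hST₁, hTS₁⟩ := h₁
  obtain ⟨hTST₂, hSTS₂, hST₂, hTS₂⟩ := h₂
  have hST₁_idem := comp_mul_comp_eq_left hTST₁ S₁
  have hST₂_idem := comp_mul_comp_eq_left hTST₂ S₂
  have hTS₁_idem := comp_mul_comp_eq_right hTST₁ S₁
  have hTS₂_idem := comp_mul_comp_eq_right hTST₂ S₂
  have hST : S₁ ∘L T = S₂ ∘L T :=
    IsIdempotentElem.eq_of_mul_eq_left_of_norm_one_sub_two_mul_le hST₁_idem hST₂_idem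
      (hST₁.norm_one_sub_two_mul_eq_one hST₁_idem).le
      (hST₂.norm_one_sub_two_mul_eq_one hST₂_idem).le
      (comp_mul_comp_eq_left hTST₂ S₁) (comp_mul_comp_eq_left hTST₁ S₂)
  have hTS : T ∘L S₁ = T ∘L S₂ :=
    IsIdempotentElem.eq_of_mul_eq_right_of_norm_one_sub_two_mul_le hTS₁_idem hTS₂_idem
      (hTS₁.norm_one_sub_two_mul_eq_one hTS₁_idem).le
      (hTS₂.norm_one_sub_two_mul_eq_one hTS₂_idem).le
      (comp_mul_comp_eq_right hTST₁ S₂) (comp_mul_comp_eq_right hTST₂ S₁)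
  calc S₁ = S₁ ∘L (T ∘L S₁) := hSTS₁.symm
    _ = (S₂ ∘L T) ∘L S₂ := by rw [hTS, ← comp_assoc, hST]
    _ = S₂ := hSTS₂
end
end

section
/- Let X and Y be complex Banach spaces and T ∈ L(X,Y). Then T has a Moore-Penrose inverse S ∈ L(Y,X) if and only if there exist hermitian idempotents P ∈ L(X) and Q ∈ L(Y) such that N(P) = N(T) and R(Q) = R(T). -/
noncomputable section

open ContinuousLinearMap

/-!
If `TST = T`, then `ST` and `TS` are idempotents with `N(ST) = N(T)` and `R(TS) = R(T)`, so a
Moore–Penrose inverse yields the required hermitian idempotents. Conversely, given idempotents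
`P`, `Q` with `N(P) = N(T)` and `R(Q) = R(T)`, the operator `T` maps the closed subspace `R(P)`
bijectively onto the closed subspace `R(Q)`; by the open mapping theorem its inverse is bounded,
and `S := T|_{R(P)}⁻¹ ∘ Q` satisfies `TST = T`, `STS = S`, `ST = P` and `TS = Q`. Hermitianity
is then inherited from `P` and `Q`.
-/

namespace ContinuousLinearMap

section Semiring

variable {R X Y : Type*} [Semiring R] [TopologicalSpace X] [AddCommMonoid X] [Module R X]
  [TopologicalSpace Y] [AddCommMonoid Y] [Module R Y] {T : X →L[R] Y} {S : Y →L[R] X}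

theorem isIdempotentElem_comp_of_comp_comp_eq_self (h : T ∘L (S ∘L T) = T) :
    IsIdempotentElem (S ∘L T) := by
  change (S ∘L T) ∘L (S ∘L T) = S ∘L T
  rw [comp_assoc, h]

theorem isIdempotentElem_comp_of_comp_comp_eq_self' (h : T ∘L (S ∘L T) = T) :
    IsIdempotentElem (T ∘L S) := by
  change (T ∘L S) ∘L (T ∘L S) = T ∘L S
  rw [← comp_assoc, comp_assoc T S T, h]

theorem ker_comp_eq_of_comp_comp_eq_self (h : T ∘L (S ∘L T) = T) :
    (S ∘L T : X →ₗ[R] X).ker = (T : X →ₗ[R] Y).ker := by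
  refine le_antisymm (fun x hx ↦ ?_)
    (by rw [toLinearMap_comp]; exact LinearMap.ker_le_ker_comp _ _)
  have hSTx : S (T x) = 0 := LinearMap.mem_ker.mp hx
  calc T x = T (S (T x)) := (DFunLike.congr_fun h x).symm
    _ = 0 := by rw [hSTx, map_zero]

theorem range_comp_eq_of_comp_comp_eq_self (h : T ∘L (S ∘L T) = T) :
    (T ∘L S : Y →ₗ[R] Y).range = (T : X →ₗ[R] Y).range := by
  refine le_antisymm (by rw [toLinearMap_comp]; exact LinearMap.range_comp_le_range _ _) ?_
  rintro _ ⟨x, rfl⟩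
  exact ⟨T x, DFunLike.congr_fun h x⟩

theorem comp_eq_self_of_range_le {Q : Y →L[R] Y} (hQ : IsIdempotentElem Q)
    (hrange : (T : X →ₗ[R] Y).range ≤ (Q : Y →ₗ[R] Y).range) : Q ∘L T = T :=
  coe_inj.mp ((LinearMap.IsIdempotentElem.comp_eq_right_iff hQ.toLinearMap _).mpr hrange)

end Semiring

theorem comp_eq_self_of_ker_le {R X Y : Type*} [Semiring R] [TopologicalSpace X]
    [AddCommGroup X] [Module R X] [TopologicalSpace Y] [AddCommGroup Y] [Module R Y]
    {T : X →L[R] Y} {P : X →L[R] X} (hP : IsIdempotentElem P)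
    (hker : (P : X →ₗ[R] X).ker ≤ (T : X →ₗ[R] Y).ker) : T ∘L P = T :=
  coe_inj.mp ((LinearMap.IsIdempotentElem.comp_eq_left_iff hP.toLinearMap _).mpr hker)

section Banach

variable {𝕜 X Y : Type*} [NontriviallyNormedField 𝕜]
  [NormedAddCommGroup X] [NormedSpace 𝕜 X] [CompleteSpace X]
  [NormedAddCommGroup Y] [NormedSpace 𝕜 Y] [CompleteSpace Y]
  {T : X →L[𝕜] Y} {P : X →L[𝕜] X} {Q : Y →L[𝕜] Y}

theorem exists_rangeEquiv_of_ker_eq_of_range_eq (hP : IsIdempotentElem P)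
    (hQ : IsIdempotentElem Q) (hker : (P : X →ₗ[𝕜] X).ker = (T : X →ₗ[𝕜] Y).ker)
    (hrange : (Q : Y →ₗ[𝕜] Y).range = (T : X →ₗ[𝕜] Y).range) :
    ∃ e : (P : X →ₗ[𝕜] X).range ≃L[𝕜] (Q : Y →ₗ[𝕜] Y).range,
      ∀ x, (e x : Y) = T x := by
  have : CompleteSpace (P : X →ₗ[𝕜] X).range := hP.isClosed_range.completeSpace_coe
  have : CompleteSpace (Q : Y →ₗ[𝕜] Y).range := hQ.isClosed_range.completeSpace_coe
  have hTP : T ∘L P = T := comp_eq_self_of_ker_le hP hker.le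
  let T₀ : (P : X →ₗ[𝕜] X).range →L[𝕜] (Q : Y →ₗ[𝕜] Y).range :=
    (T ∘L Submodule.subtypeL _).codRestrict _ fun x ↦ hrange ▸ ⟨x, rfl⟩
  have hinj : T₀.ker = ⊥ := by
    refine LinearMap.ker_eq_bot'.mpr fun ⟨x, hx⟩ hTx ↦ Subtype.ext ?_
    have hPx : x ∈ (P : X →ₗ[𝕜] X).ker := hker ▸ congrArg Subtype.val hTx
    exact ((LinearMap.IsIdempotentElem.mem_range_iff hP.toLinearMap).mp hx).symm.trans hPx
  have hsurj : T₀.range = ⊤ := by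
    refine LinearMap.range_eq_top.mpr fun ⟨y, hy⟩ ↦ ?_
    obtain ⟨x, rfl⟩ := hrange ▸ hy
    exact ⟨⟨P x, x, rfl⟩, Subtype.ext (DFunLike.congr_fun hTP x)⟩
  exact ⟨.ofBijective T₀ hinj hsurj, fun _ ↦ rfl⟩

theorem exists_reflexive_inverse_of_ker_eq_of_range_eq (hP : IsIdempotentElem P)
    (hQ : IsIdempotentElem Q) (hker : (P : X →ₗ[𝕜] X).ker = (T : X →ₗ[𝕜] Y).ker)
    (hrange : (Q : Y →ₗ[𝕜] Y).range = (T : X →ₗ[𝕜] Y).range) :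
    ∃ S : Y →L[𝕜] X,
      T ∘L (S ∘L T) = T ∧ S ∘L (T ∘L S) = S ∧ S ∘L T = P ∧ T ∘L S = Q := by
  obtain ⟨e, he⟩ := exists_rangeEquiv_of_ker_eq_of_range_eq hP hQ hker hrange
  have hTP : T ∘L P = T := comp_eq_self_of_ker_le hP hker.le
  have hQT : Q ∘L T = T := comp_eq_self_of_range_le hQ hrange.ge
  let S : Y →L[𝕜] X :=
    (P : X →ₗ[𝕜] X).range.subtypeL ∘L (e.symm : _ →L[𝕜] _) ∘L Q.rangeRestrict
  have hST : S ∘L T = P := by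
    ext x
    have hQTx : Q.rangeRestrict (T x) = e ⟨P x, x, rfl⟩ := Subtype.ext <| by
      rw [he]
      exact (DFunLike.congr_fun hQT x).trans (DFunLike.congr_fun hTP x).symm
    change (e.symm (Q.rangeRestrict (T x)) : X) = P x
    rw [hQTx, e.symm_apply_apply]
  have hTS : T ∘L S = Q := by
    ext y
    change T (e.symm (Q.rangeRestrict y)) = Q y
    rw [← he, e.apply_symm_apply]
    rfl
  have hPS : P ∘L S = S := by
    refine comp_eq_self_of_range_le hP ?_
    rintro _ ⟨y, rfl⟩
    exact (e.symm (Q.rangeRestrict y)).2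
  exact ⟨S, by rw [hST, hTP], by rw [← comp_assoc, hST, hPS], hST, hTS⟩

end Banach

end ContinuousLinearMap

/-- A Banach space operator has a Moore–Penrose inverse iff there are hermitian idempotents
`P`, `Q` with `N(P) = N(T)` and `R(Q) = R(T)`. -/
theorem mpInv_exists_iff {X Y : Type*}
    [NormedAddCommGroup X] [NormedSpace ℂ X] [CompleteSpace X]
    [NormedAddCommGroup Y] [NormedSpace ℂ Y] [CompleteSpace Y]
    (T : X →L[ℂ] Y) :
    (∃ S : Y →L[ℂ] X, IsMPInv T S) ↔
      ∃ (P : X →L[ℂ] X) (Q : Y →L[ℂ] Y),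
        IsIdempotentElem P ∧ IsHermitianOp P ∧
        IsIdempotentElem Q ∧ IsHermitianOp Q ∧
        LinearMap.ker (P : X →ₗ[ℂ] X) = LinearMap.ker (T : X →ₗ[ℂ] Y) ∧ LinearMap.range (Q : Y →ₗ[ℂ] Y) = LinearMap.range (T : X →ₗ[ℂ] Y) := by
  constructor
  · rintro ⟨S, hTST, -, hST, hTS⟩
    exact ⟨S ∘L T, T ∘L S, isIdempotentElem_comp_of_comp_comp_eq_self hTST, hST,
      isIdempotentElem_comp_of_comp_comp_eq_self' hTST, hTS,
      ker_comp_eq_of_comp_comp_eq_self hTST, range_comp_eq_of_comp_comp_eq_self hTST⟩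
  · rintro ⟨P, Q, hP, hPh, hQ, hQh, hker, hrange⟩
    obtain ⟨S, hTST, hSTS, hST, hTS⟩ :=
      exists_reflexive_inverse_of_ker_eq_of_range_eq hP hQ hker hrange
    exact ⟨S, hTST, hSTS, hST ▸ hPh, hTS ▸ hQh⟩
end
end

section
/- Let X and Y be complex Banach spaces and T ∈ L(X,Y), and suppose S ∈ L(Y,X) is a Moore-Penrose inverse of T. Then the adjoint (dual) operator T* ∈ L(Y*,X*) has a Moore-Penrose inverse, namely S* ∈ L(X*,Y*): T* S* T* = T*, S* T* S* = S*, and S* T* ∈ L(Y*) and T* S* ∈ L(X*) are hermitian; thus (T*)† = (T†)*. -/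
/-!
Dualisation `A ↦ A*` reverses products, is continuous and linear, and is isometric
(`‖A*‖ = ‖A‖` by Hahn–Banach). Viewed as a continuous ring homomorphism into the opposite
algebra it therefore commutes with the exponential series, so `exp (i t H*) = (exp (i t H))*`
has the same norm as `exp (i t H)`: duals of hermitian operators are hermitian. The algebraic
Moore–Penrose identities dualise directly, with `(ST)* = T*S*` and `(TS)* = S*T*`.
-/

noncomputable section

open ContinuousLinearMap

/-- The adjoint (dual) map of `T : X →L[ℂ] Y`, sending `g : Y* ` to `g ∘ T : X*`. -/
def dualOp {X Y : Type*} [NormedAddCommGroup X] [NormedSpace ℂ X]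
    [NormedAddCommGroup Y] [NormedSpace ℂ Y] (T : X →L[ℂ] Y) :
    StrongDual ℂ Y →L[ℂ] StrongDual ℂ X :=
  (ContinuousLinearMap.compL ℂ X Y ℂ).flip T

section

variable {X Y Z : Type*} [NormedAddCommGroup X] [NormedSpace ℂ X]
  [NormedAddCommGroup Y] [NormedSpace ℂ Y] [NormedAddCommGroup Z] [NormedSpace ℂ Z]

theorem dualOp_comp (A : Y →L[ℂ] Z) (B : X →L[ℂ] Y) :
    dualOp (A ∘L B) = dualOp B ∘L dualOp A :=
  rfl

theorem dualOp_smul (c : ℂ) (A : X →L[ℂ] Y) : dualOp (c • A) = c • dualOp A :=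
  map_smul _ c A

theorem flip_dualOp (A : X →L[ℂ] Y) :
    (dualOp A).flip = (NormedSpace.inclusionInDoubleDualLi ℂ).toContinuousLinearMap ∘L A :=
  rfl

theorem norm_dualOp (A : X →L[ℂ] Y) : ‖dualOp A‖ = ‖A‖ := by
  rw [← opNorm_flip, flip_dualOp]
  exact LinearIsometry.norm_toContinuousLinearMap_comp _

-- Instance search does not find this one on the nested operator space.
instance : IsTopologicalRing (StrongDual ℂ X →L[ℂ] StrongDual ℂ X) :=
  @NonUnitalSeminormedRing.toIsTopologicalRing (StrongDual ℂ X →L[ℂ] StrongDual ℂ X) _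

variable (X) in
set_option synthInstance.maxHeartbeats 100000 in
def dualOpRingHom : (X →L[ℂ] X) →+* (StrongDual ℂ X →L[ℂ] StrongDual ℂ X)ᵐᵒᵖ where
  toFun A := MulOpposite.op (dualOp A)
  map_one' := rfl
  map_mul' A B := congrArg MulOpposite.op (dualOp_comp A B)
  map_zero' := by simp [dualOp]
  map_add' _ _ := by simp [dualOp]

@[simp]
theorem dualOpRingHom_apply (A : X →L[ℂ] X) : dualOpRingHom X A = MulOpposite.op (dualOp A) :=
  rfl

theorem continuous_dualOpRingHom : Continuous (dualOpRingHom X) :=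
  MulOpposite.continuous_op.comp (compL ℂ X X ℂ).flip.continuous

theorem dualOp_exp [CompleteSpace X] (A : X →L[ℂ] X) :
    dualOp (NormedSpace.exp A) = NormedSpace.exp (dualOp A) := by
  have := NormedSpace.map_exp_of_mem_ball (𝕂 := ℂ) (dualOpRingHom X) continuous_dualOpRingHom A
    ((NormedSpace.expSeries_radius_eq_top ℂ (X →L[ℂ] X)).symm ▸ edist_lt_top _ _)
  simpa using congrArg MulOpposite.unop this

theorem IsHermitianOp.dualOp [CompleteSpace X] {H : X →L[ℂ] X} (hH : IsHermitianOp H) :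
    IsHermitianOp (dualOp H) := fun t => by
  rw [← dualOp_smul, ← dualOp_exp, norm_dualOp, hH t]

end

/-- If `S` is the Moore–Penrose inverse of `T`, then `S*` is the Moore–Penrose inverse of
the adjoint `T*`; that is, `(T*)† = (T†)*`. -/
theorem mpInv_dualOp {X Y : Type*}
    [NormedAddCommGroup X] [NormedSpace ℂ X] [CompleteSpace X]
    [NormedAddCommGroup Y] [NormedSpace ℂ Y] [CompleteSpace Y]
    (T : X →L[ℂ] Y) (S : Y →L[ℂ] X) (h : IsMPInv T S) :
    IsMPInv (dualOp T) (dualOp S) := by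
  obtain ⟨hTST, hSTS, hST, hTS⟩ := h
  exact ⟨congrArg dualOp hTST, congrArg dualOp hSTS, hTS.dualOp, hST.dualOp⟩
end
end

section
/- Let X and Y be complex Banach spaces, T ∈ L(X), C ∈ L(X,Y) surjective, B ∈ L(Y,X) injective, with T = BC, suppose T has a Moore-Penrose inverse T†, and let B† and C† denote the Moore-Penrose inverses of B and C. Then the following statements are equivalent: (i) T is EP; (ii) there exists a bijective W ∈ L(Y) such that B = C†W; (iii) there exists a surjective W₁ ∈ L(Y) such that B = C†W₁; (iv) there exist W₂, W₃ ∈ L(Y) such that B = C†W₂ and C† = BW₃; (v) there exist H₁, H₂ ∈ L(Y) such that B = C†H₂ and C = H₁B†; (vi) there exist K₁, K₂ ∈ L(Y) such that C† = BK₂ and B† = K₁C; (vii) there exists a surjective S₂ ∈ L(Y) such that C† = BS₂. -/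
noncomputable section

open ContinuousLinearMap

/-!
A hermitian idempotent `P` satisfies `‖1 - 2P‖ = 1`, because `exp (iπP) = 1 - 2P`. Two such
idempotents with the same kernel (`PQ = P`, `QP = Q`) coincide: `D = 2(P - Q)` has `D² = 0` and
`1 + D = (1 - 2P)(1 - 2Q)` is a contraction, while `‖(1 + D)ⁿ‖ = ‖1 + nD‖` grows linearly unless
`D = 0`; passing to `1 - P`, `1 - Q` gives the same for equal ranges.

Hence `TT† = BB†` (both project onto the range of `B`) and `T†T = C†C` (both have the kernel
of `C`), so `T` is EP iff `BB† = C†C`. Using `B†B = 1` and `CC† = 1`, conditions (ii)–(iv) and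
(vii) say that `B` and `C†` have the same range, which gives `BB† = C†C` as above, while (v) and
(vi) each give one range and one kernel inclusion between the idempotents `BB†` and `C†C`, which
forces equality algebraically. Conversely, if `BB† = C†C` then `CB` and `B†C†` are mutually
inverse and supply all the required factors.
-/

section NormedRing

variable {A : Type*} [NormedRing A] [NormedSpace ℝ A]

theorem eq_zero_of_mul_self_eq_zero_of_norm_one_add_le {D : A} (hD : D * D = 0)
    (h : ‖1 + D‖ ≤ 1) : D = 0 := by
  have hpow : ∀ n : ℕ, (1 + D) ^ n = 1 + n * D := by
    intro n
    induction n with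
    | zero => simp
    | succ n ih =>
      rw [pow_succ, ih]
      simp only [add_mul, mul_add, one_mul, mul_one, mul_assoc, hD, mul_zero, Nat.cast_succ]
      abel
  have hbound : ∀ n : ℕ, (n + 1) * ‖D‖ ≤ 1 + ‖(1 : A)‖ := fun n =>
    calc (n + 1) * ‖D‖ = ‖(1 + D) ^ (n + 1) - 1‖ := by
          rw [hpow, add_sub_cancel_left, ← nsmul_eq_mul, RCLike.norm_nsmul ℝ, nsmul_eq_mul,
            Nat.cast_succ]
      _ ≤ ‖(1 + D) ^ (n + 1)‖ + ‖(1 : A)‖ := norm_sub_le _ _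
      _ ≤ 1 + ‖(1 : A)‖ := by
          gcongr
          exact (norm_pow_le' _ n.succ_pos).trans (pow_le_one₀ (norm_nonneg _) h)
  by_contra hne
  obtain ⟨n, hn⟩ := exists_nat_gt ((1 + ‖(1 : A)‖) / ‖D‖)
  have := (div_lt_iff₀ (norm_pos_iff.2 hne)).1 hn
  nlinarith [hbound n, norm_nonneg D]

theorem IsIdempotentElem.eq_of_mul_eq_left {P Q : A} (hP : IsIdempotentElem P)
    (hQ : IsIdempotentElem Q) (hP1 : ‖1 - 2 * P‖ ≤ 1) (hQ1 : ‖1 - 2 * Q‖ ≤ 1)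
    (hPQ : P * Q = P) (hQP : Q * P = Q) : P = Q := by
  have hsq : (2 * (P - Q)) * (2 * (P - Q)) = 0 := by
    simp only [two_mul, add_mul, mul_add, sub_mul, mul_sub, hP.eq, hQ.eq, hPQ, hQP]; abel
  have hprod : (1 - 2 * P) * (1 - 2 * Q) = 1 + 2 * (P - Q) := by
    simp only [two_mul, add_mul, mul_add, sub_mul, mul_sub, one_mul, mul_one, hPQ]; abel
  have h2 : 2 * (P - Q) = 0 := eq_zero_of_mul_self_eq_zero_of_norm_one_add_le hsq <| by
    rw [← hprod]; exact (norm_mul_le _ _).trans (mul_le_one₀ hP1 (norm_nonneg _) hQ1)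
  rw [two_mul, ← two_smul ℝ] at h2
  exact sub_eq_zero.mp ((smul_eq_zero.mp h2).resolve_left two_ne_zero)

theorem IsIdempotentElem.eq_of_mul_eq_right {P Q : A} (hP : IsIdempotentElem P)
    (hQ : IsIdempotentElem Q) (hP1 : ‖1 - 2 * P‖ ≤ 1) (hQ1 : ‖1 - 2 * Q‖ ≤ 1)
    (hPQ : P * Q = Q) (hQP : Q * P = P) : P = Q := by
  have hreflect (R : A) : ‖1 - 2 * (1 - R)‖ = ‖1 - 2 * R‖ := by
    rw [← norm_neg]; congr 1; noncomm_ring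
  have := hP.one_sub.eq_of_mul_eq_left hQ.one_sub (by rwa [hreflect]) (by rwa [hreflect])
    (by simp only [sub_mul, mul_sub, one_mul, mul_one, hPQ]; abel)
    (by simp only [sub_mul, mul_sub, one_mul, mul_one, hQP]; abel)
  exact sub_right_inj.mp this

end NormedRing

theorem IsIdempotentElem.exp_smul_s7 {A : Type*} [Ring A] [Algebra ℂ A] [TopologicalSpace A]
    [IsTopologicalRing A] [ContinuousSMul ℂ A] [T2Space A] {P : A} (hP : IsIdempotentElem P)
    (c : ℂ) : NormedSpace.exp (c • P) = 1 + (Complex.exp c - 1) • P := by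
  have hc : HasSum (fun n => ((n + 1).factorial⁻¹ : ℂ) • c ^ (n + 1)) (Complex.exp c - 1) := by
    simpa [Complex.exp_eq_exp_ℂ] using
      (hasSum_nat_add_iff' 1).mpr (NormedSpace.exp_series_hasSum_exp' (𝕂 := ℂ) c)
  rw [NormedSpace.exp_eq_tsum ℂ]
  refine HasSum.tsum_eq ((hasSum_nat_add_iff' 1).mp ?_)
  simpa [smul_pow, hP.pow_succ_eq, smul_smul] using hc.smul_const P

section Operators

variable {X : Type*} [NormedAddCommGroup X] [NormedSpace ℂ X]

theorem IsHermitianOp.norm_one_sub_two_mul {P : X →L[ℂ] X} (hH : IsHermitianOp P)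
    (hP : IsIdempotentElem P) : ‖1 - 2 * P‖ = 1 := by
  have h := hH Real.pi
  rw [hP.exp_smul_s7, mul_comm, Complex.exp_pi_mul_I, show (-1 - 1 : ℂ) = -2 by norm_num,
    neg_smul, ← sub_eq_add_neg, two_smul] at h
  rwa [two_mul]

theorem IsHermitianOp.eq_of_mul_eq_left {P Q : X →L[ℂ] X} (hHP : IsHermitianOp P)
    (hHQ : IsHermitianOp Q) (hP : IsIdempotentElem P) (hQ : IsIdempotentElem Q)
    (hPQ : P * Q = P) (hQP : Q * P = Q) : P = Q :=
  hP.eq_of_mul_eq_left hQ (hHP.norm_one_sub_two_mul hP).le (hHQ.norm_one_sub_two_mul hQ).le hPQ hQP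

theorem IsHermitianOp.eq_of_mul_eq_right {P Q : X →L[ℂ] X} (hHP : IsHermitianOp P)
    (hHQ : IsHermitianOp Q) (hP : IsIdempotentElem P) (hQ : IsIdempotentElem Q)
    (hPQ : P * Q = Q) (hQP : Q * P = P) : P = Q :=
  hP.eq_of_mul_eq_right hQ (hHP.norm_one_sub_two_mul hP).le (hHQ.norm_one_sub_two_mul hQ).le hPQ hQP

end Operators

namespace ContinuousLinearMap

variable {R : Type*} [Semiring R] {E F G : Type*}
  [TopologicalSpace E] [AddCommMonoid E] [Module R E]
  [TopologicalSpace F] [AddCommMonoid F] [Module R F]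
  [TopologicalSpace G] [AddCommMonoid G] [Module R G]

theorem comp_comp_eq_of_eq_comp {f : F →L[R] E} {g : E →L[R] F} {b : G →L[R] E}
    {w : G →L[R] F} (hgf : g ∘L f = .id R F) (hb : b = f ∘L w) : f ∘L g ∘L b = b := by
  subst hb
  ext x
  exact congr(f ($hgf (w x)))

theorem comp_comp_eq_of_eq_comp_right {f : F →L[R] E} {g : E →L[R] F} {b : E →L[R] G}
    {w : F →L[R] G} (hgf : g ∘L f = .id R F) (hb : b = w ∘L g) : b ∘L f ∘L g = b := by
  subst hb
  ext x
  exact congr(w ($hgf (g x)))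

theorem comp_comp_eq_of_comp_eq_of_surjective {f : F →L[R] E} {g : E →L[R] G}
    {b : G →L[R] E} {w : G →L[R] F} (hgb : g ∘L b = .id R G) (hw : Function.Surjective w)
    (hf : f ∘L w = b) : b ∘L g ∘L f = f := by
  ext x
  obtain ⟨y, rfl⟩ := hw x
  have hfy : f (w y) = b y := congr($hf y)
  simp only [comp_apply, hfy]
  exact congr(b ($hgb y))

end ContinuousLinearMap

namespace IsMPInv

variable {X Y : Type*} [NormedAddCommGroup X] [NormedSpace ℂ X]
  [NormedAddCommGroup Y] [NormedSpace ℂ Y] {T : X →L[ℂ] Y} {S : Y →L[ℂ] X}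

theorem isIdempotentElem_inv_comp (h : IsMPInv T S) : IsIdempotentElem (S ∘L T) := by
  rw [IsIdempotentElem, mul_def, comp_assoc, h.1]

theorem isIdempotentElem_comp_inv (h : IsMPInv T S) : IsIdempotentElem (T ∘L S) := by
  rw [IsIdempotentElem, mul_def, comp_assoc, h.2.1]

theorem inv_comp_eq_id_of_injective (h : IsMPInv T S) (hT : Function.Injective T) :
    S ∘L T = .id ℂ X :=
  ext fun x => hT (DFunLike.congr_fun h.1 x)

theorem comp_inv_eq_id_of_surjective (h : IsMPInv T S) (hT : Function.Surjective T) :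
    T ∘L S = .id ℂ Y := by
  ext y
  obtain ⟨x, rfl⟩ := hT y
  exact DFunLike.congr_fun h.1 x

end IsMPInv

section Factorization

variable {X Y Z : Type*} [NormedAddCommGroup X] [NormedSpace ℂ X]
  [NormedAddCommGroup Y] [NormedSpace ℂ Y] [NormedAddCommGroup Z] [NormedSpace ℂ Z]

theorem IsMPInv.comp_inv_eq_of_eq_comp {T Td : X →L[ℂ] X} {B : Y →L[ℂ] X} {Bd : X →L[ℂ] Y}
    {C : X →L[ℂ] Y} (hTd : IsMPInv T Td) (hBd : IsMPInv B Bd) (hT : T = B ∘L C)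
    (hC : Function.Surjective C) : T ∘L Td = B ∘L Bd := by
  have hTx (x : X) : T x = B (C x) := by rw [hT]; rfl
  have hTdB : (T ∘L Td) ∘L B = B := by
    ext y
    obtain ⟨x, rfl⟩ := hC y
    change T (Td (B (C x))) = B (C x)
    rw [← hTx]
    exact DFunLike.congr_fun hTd.1 x
  refine hTd.2.2.2.eq_of_mul_eq_right hBd.2.2.2 hTd.isIdempotentElem_comp_inv
    hBd.isIdempotentElem_comp_inv ?_ ?_
  · rw [mul_def, ← comp_assoc, hTdB]
  · rw [mul_def, hT]
    simp only [← comp_assoc]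
    rw [comp_assoc B Bd B, hBd.1]

theorem IsMPInv.inv_comp_eq_of_eq_comp {T Td : X →L[ℂ] X} {B : Y →L[ℂ] X} {C : X →L[ℂ] Y}
    {Cd : Y →L[ℂ] X} (hTd : IsMPInv T Td) (hCd : IsMPInv C Cd) (hT : T = B ∘L C)
    (hB : Function.Injective B) : Td ∘L T = Cd ∘L C := by
  have hTx (x : X) : T x = B (C x) := by rw [hT]; rfl
  have hCTdT : C ∘L (Td ∘L T) = C := by
    ext x
    apply hB
    change B (C (Td (T x))) = B (C x)
    rw [← hTx, ← hTx]
    exact DFunLike.congr_fun hTd.1 x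
  refine hTd.2.2.1.eq_of_mul_eq_left hCd.2.2.1 hTd.isIdempotentElem_inv_comp
    hCd.isIdempotentElem_inv_comp ?_ ?_
  · rw [mul_def, hT]
    simp only [comp_assoc, hCd.1]
  · rw [mul_def, comp_assoc, hCTdT]

theorem IsMPInv.comp_inv_eq_inv_comp {B : Y →L[ℂ] X} {Bd : X →L[ℂ] Y} {C : X →L[ℂ] Z}
    {Cd : Z →L[ℂ] X} (hBd : IsMPInv B Bd) (hCd : IsMPInv C Cd) (hCdCB : Cd ∘L C ∘L B = B)
    (hBBdCd : B ∘L Bd ∘L Cd = Cd) : B ∘L Bd = Cd ∘L C := by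
  refine hBd.2.2.2.eq_of_mul_eq_right hCd.2.2.1 hBd.isIdempotentElem_comp_inv
    hCd.isIdempotentElem_inv_comp ?_ ?_
  · rw [mul_def, ← comp_assoc, comp_assoc B, hBBdCd]
  · rw [mul_def, ← comp_assoc, comp_assoc Cd, hCdCB]

end Factorization

section CommonProjection

variable {X Y : Type*} [NormedAddCommGroup X] [NormedSpace ℂ X]
  [NormedAddCommGroup Y] [NormedSpace ℂ Y]
  {B : Y →L[ℂ] X} {Bd : X →L[ℂ] Y} {C : X →L[ℂ] Y} {Cd : Y →L[ℂ] X}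

theorem leftInverse_of_comp_inv_eq_inv_comp (hBB : Bd ∘L B = .id ℂ Y)
    (h : B ∘L Bd = Cd ∘L C) : Function.LeftInverse (Bd ∘L Cd) (C ∘L B) := fun y => by
  change Bd ((Cd ∘L C) (B y)) = y
  rw [← h]
  change Bd (B ((Bd ∘L B) y)) = y
  rw [hBB]
  exact DFunLike.congr_fun hBB y

theorem rightInverse_of_comp_inv_eq_inv_comp (hCC : C ∘L Cd = .id ℂ Y)
    (h : B ∘L Bd = Cd ∘L C) : Function.RightInverse (Bd ∘L Cd) (C ∘L B) := fun y => by
  change C ((B ∘L Bd) (Cd y)) = y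
  rw [h]
  change C (Cd ((C ∘L Cd) y)) = y
  rw [hCC]
  exact DFunLike.congr_fun hCC y

theorem exists_bijective_of_comp_inv_eq_inv_comp (hBd : IsMPInv B Bd)
    (hBB : Bd ∘L B = .id ℂ Y) (hCC : C ∘L Cd = .id ℂ Y) (h : B ∘L Bd = Cd ∘L C) :
    ∃ W : Y →L[ℂ] Y, Function.Bijective W ∧ B = Cd ∘L W :=
  ⟨C ∘L B, ⟨(leftInverse_of_comp_inv_eq_inv_comp hBB h).injective,
    (rightInverse_of_comp_inv_eq_inv_comp hCC h).surjective⟩,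
    by rw [← comp_assoc, ← h, comp_assoc, hBd.1]⟩

theorem exists_surjective_of_comp_inv_eq_inv_comp (hCd : IsMPInv C Cd)
    (hBB : Bd ∘L B = .id ℂ Y) (h : B ∘L Bd = Cd ∘L C) :
    ∃ S : Y →L[ℂ] Y, Function.Surjective S ∧ Cd = B ∘L S :=
  ⟨Bd ∘L Cd, (leftInverse_of_comp_inv_eq_inv_comp hBB h).surjective,
    by rw [← comp_assoc, h, comp_assoc, hCd.2.1]⟩

theorem comp_inv_eq_inv_comp_iff_exists_comp_right_left (hBd : IsMPInv B Bd)
    (hCd : IsMPInv C Cd) (hBB : Bd ∘L B = .id ℂ Y) (hCC : C ∘L Cd = .id ℂ Y) :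
    B ∘L Bd = Cd ∘L C ↔ ∃ H₁ H₂ : Y →L[ℂ] Y, B = Cd ∘L H₂ ∧ C = H₁ ∘L Bd := by
  constructor
  · intro h
    refine ⟨C ∘L B, C ∘L B, ?_, ?_⟩
    · rw [← comp_assoc, ← h, comp_assoc, hBd.1]
    · rw [comp_assoc, h, hCd.1]
  · rintro ⟨H₁, H₂, hB, hC⟩
    have hCdCB : Cd ∘L C ∘L B = B := comp_comp_eq_of_eq_comp hCC hB
    have hCBBd : C ∘L B ∘L Bd = C := comp_comp_eq_of_eq_comp_right hBB hC
    calc B ∘L Bd = (Cd ∘L C ∘L B) ∘L Bd := by rw [hCdCB]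
      _ = Cd ∘L C ∘L B ∘L Bd := by simp only [comp_assoc]
      _ = Cd ∘L C := by rw [hCBBd]

theorem comp_inv_eq_inv_comp_iff_exists_comp_left_right (hBd : IsMPInv B Bd)
    (hCd : IsMPInv C Cd) (hBB : Bd ∘L B = .id ℂ Y) (hCC : C ∘L Cd = .id ℂ Y) :
    B ∘L Bd = Cd ∘L C ↔ ∃ K₁ K₂ : Y →L[ℂ] Y, Cd = B ∘L K₂ ∧ Bd = K₁ ∘L C := by
  constructor
  · intro h
    refine ⟨Bd ∘L Cd, Bd ∘L Cd, ?_, ?_⟩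
    · rw [← comp_assoc, h, comp_assoc, hCd.2.1]
    · rw [comp_assoc, ← h, hBd.2.1]
  · rintro ⟨K₁, K₂, hCd', hBd'⟩
    have hBBdCd : B ∘L Bd ∘L Cd = Cd := comp_comp_eq_of_eq_comp hBB hCd'
    have hBdCdC : Bd ∘L Cd ∘L C = Bd := comp_comp_eq_of_eq_comp_right hCC hBd'
    calc B ∘L Bd = B ∘L Bd ∘L Cd ∘L C := by rw [hBdCdC]
      _ = (B ∘L Bd ∘L Cd) ∘L C := by simp only [comp_assoc]
      _ = Cd ∘L C := by rw [hBBdCd]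

end CommonProjection

theorem ep_tfae_right_factor_general {X Y : Type*}
    [NormedAddCommGroup X] [NormedSpace ℂ X]
    [NormedAddCommGroup Y] [NormedSpace ℂ Y]
    (T : X →L[ℂ] X) (C : X →L[ℂ] Y) (B : Y →L[ℂ] X)
    (hC : Function.Surjective C) (hB : Function.Injective B) (hT : T = B ∘L C)
    (Td : X →L[ℂ] X) (Bd : X →L[ℂ] Y) (Cd : Y →L[ℂ] X)
    (hTd : IsMPInv T Td) (hBd : IsMPInv B Bd) (hCd : IsMPInv C Cd) :
    List.TFAE
      [T ∘L Td = Td ∘L T,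
       ∃ W : Y →L[ℂ] Y, Function.Bijective W ∧ B = Cd ∘L W,
       ∃ W₁ : Y →L[ℂ] Y, Function.Surjective W₁ ∧ B = Cd ∘L W₁,
       ∃ W₂ W₃ : Y →L[ℂ] Y, B = Cd ∘L W₂ ∧ Cd = B ∘L W₃,
       ∃ H₁ H₂ : Y →L[ℂ] Y, B = Cd ∘L H₂ ∧ C = H₁ ∘L Bd,
       ∃ K₁ K₂ : Y →L[ℂ] Y, Cd = B ∘L K₂ ∧ Bd = K₁ ∘L C,
       ∃ S₂ : Y →L[ℂ] Y, Function.Surjective S₂ ∧ Cd = B ∘L S₂] := by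
  have hBB := hBd.inv_comp_eq_id_of_injective hB
  have hCC := hCd.comp_inv_eq_id_of_surjective hC
  have hEP : T ∘L Td = Td ∘L T ↔ B ∘L Bd = Cd ∘L C := by
    rw [hTd.comp_inv_eq_of_eq_comp hBd hT hC, hTd.inv_comp_eq_of_eq_comp hCd hT hB]
  tfae_have 1 → 2 := fun h => exists_bijective_of_comp_inv_eq_inv_comp hBd hBB hCC (hEP.1 h)
  tfae_have 2 → 3 := fun ⟨W, hW, hBW⟩ => ⟨W, hW.2, hBW⟩
  tfae_have 3 → 4 := fun ⟨W₁, hW₁, hBW₁⟩ =>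
    ⟨W₁, Bd ∘L Cd, hBW₁, (comp_comp_eq_of_comp_eq_of_surjective hBB hW₁ hBW₁.symm).symm⟩
  tfae_have 4 → 1 := fun ⟨_, _, hBW₂, hCdW₃⟩ => hEP.2 <| hBd.comp_inv_eq_inv_comp hCd
    (comp_comp_eq_of_eq_comp hCC hBW₂) (comp_comp_eq_of_eq_comp hBB hCdW₃)
  tfae_have 1 ↔ 5 := hEP.trans (comp_inv_eq_inv_comp_iff_exists_comp_right_left hBd hCd hBB hCC)
  tfae_have 1 ↔ 6 := hEP.trans (comp_inv_eq_inv_comp_iff_exists_comp_left_right hBd hCd hBB hCC)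
  tfae_have 1 → 7 := fun h => exists_surjective_of_comp_inv_eq_inv_comp hCd hBB (hEP.1 h)
  tfae_have 7 → 4 := fun ⟨S₂, hS₂, hCdS₂⟩ =>
    ⟨C ∘L B, S₂, (comp_comp_eq_of_comp_eq_of_surjective hCC hS₂ hCdS₂.symm).symm, hCdS₂⟩
  tfae_finish

/-- For `T = BC` with `C` surjective, `B` injective, and Moore–Penrose inverses `T†`, `B†`,
`C†`: `T` is EP iff `B = C†W` for a bijective `W`, iff `B = C†W₁` for a surjective `W₁`,
iff `B = C†W₂` and `C† = BW₃`, iff `B = C†H₂` and `C = H₁B†`, iff `C† = BK₂` and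
`B† = K₁C`, iff `C† = BS₂` for a surjective `S₂`. -/
theorem ep_tfae_right_factor {X Y : Type*}
    [NormedAddCommGroup X] [NormedSpace ℂ X] [CompleteSpace X]
    [NormedAddCommGroup Y] [NormedSpace ℂ Y] [CompleteSpace Y]
    (T : X →L[ℂ] X) (C : X →L[ℂ] Y) (B : Y →L[ℂ] X)
    (hC : Function.Surjective C) (hB : Function.Injective B) (hT : T = B ∘L C)
    (Td : X →L[ℂ] X) (Bd : X →L[ℂ] Y) (Cd : Y →L[ℂ] X)
    (hTd : IsMPInv T Td) (hBd : IsMPInv B Bd) (hCd : IsMPInv C Cd) :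
    List.TFAE
      [T ∘L Td = Td ∘L T,
       ∃ W : Y →L[ℂ] Y, Function.Bijective W ∧ B = Cd ∘L W,
       ∃ W₁ : Y →L[ℂ] Y, Function.Surjective W₁ ∧ B = Cd ∘L W₁,
       ∃ W₂ W₃ : Y →L[ℂ] Y, B = Cd ∘L W₂ ∧ Cd = B ∘L W₃,
       ∃ H₁ H₂ : Y →L[ℂ] Y, B = Cd ∘L H₂ ∧ C = H₁ ∘L Bd,
       ∃ K₁ K₂ : Y →L[ℂ] Y, Cd = B ∘L K₂ ∧ Bd = K₁ ∘L C,
       ∃ S₂ : Y →L[ℂ] Y, Function.Surjective S₂ ∧ Cd = B ∘L S₂] :=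
  ep_tfae_right_factor_general T C B hC hB hT Td Bd Cd hTd hBd hCd
end
end

section
/- Let A be a unital C*-algebra with unit e and let a ∈ A have a Moore-Penrose inverse a†. (i) If p = aa†, then v = e − p + (a†)*a† is invertible in A, a† = a*v, and aa*v = vaa* = p. (ii) If q = a†a, then w = e − q + a†(a†)* is invertible in A, a† = wa*, and wa*a = a*aw = q. -/
/-!
With `p = a a†`, the elements `(a†)* a†` and `a a*` lie in the corner `p A p` and are mutually
inverse there, so `v = (1 - p) + (a†)* a†` is invertible with inverse `(1 - p) + a a*`.
Part (ii) is part (i) applied to `a*`, whose Moore–Penrose inverse is `(a†)*`, together with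
the self-adjointness of `w`.
-/

noncomputable section

def IsMPInvStar {A : Type*} [Ring A] [StarRing A] (a x : A) : Prop :=
  a * x * a = a ∧ x * a * x = x ∧ IsSelfAdjoint (a * x) ∧ IsSelfAdjoint (x * a)

section Corner

variable {R : Type*} [Ring R] {p s t : R}

lemma mul_one_sub_add_of_mul_eq (htp : t * p = t) (hts : t * s = p) :
    t * (1 - p + s) = p := by
  rw [mul_add, mul_sub, mul_one, htp, hts, sub_self, zero_add]

lemma one_sub_add_mul_of_mul_eq (hpt : p * t = t) (hst : s * t = p) :
    (1 - p + s) * t = p := by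
  rw [add_mul, sub_mul, one_mul, hpt, hst, sub_self, zero_add]

lemma isUnit_one_sub_add_of_corner_inverse (hp : p * p = p) (hps : p * s = s) (hsp : s * p = s)
    (hpt : p * t = t) (htp : t * p = t) (hst : s * t = p) (hts : t * s = p) :
    IsUnit (1 - p + s) := by
  refine ⟨⟨1 - p + s, 1 - p + t, ?_, ?_⟩, rfl⟩ <;>
  · simp only [mul_add, add_mul, mul_sub, sub_mul, mul_one, one_mul, hp, hps, hsp, hpt, htp,
      hst, hts]
    abel

end Corner

namespace IsMPInvStar

variable {R : Type*} [Ring R] [StarRing R] {a x : R}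

lemma star_mul_star (h : IsMPInvStar a x) : star x * star a = a * x := by
  rw [← star_mul, h.2.2.1.star_eq]

lemma star_mul_star' (h : IsMPInvStar a x) : star a * star x = x * a := by
  rw [← star_mul, h.2.2.2.star_eq]

lemma star_mul_mul (h : IsMPInvStar a x) : star a * a * x = star a := by
  rw [mul_assoc, ← h.star_mul_star, ← mul_assoc, ← star_mul, ← star_mul, ← mul_assoc, h.1]

lemma mul_mul_star (h : IsMPInvStar a x) : x * a * star a = star a := by
  rw [← h.star_mul_star', mul_assoc, ← star_mul, ← star_mul, h.1]

lemma symm (h : IsMPInvStar a x) : IsMPInvStar x a :=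
  ⟨h.2.1, h.1, h.2.2.2, h.2.2.1⟩

protected lemma star (h : IsMPInvStar a x) : IsMPInvStar (star a) (star x) := by
  refine ⟨?_, ?_, ?_, ?_⟩
  · rw [← star_mul, ← star_mul, ← mul_assoc, h.1]
  · rw [← star_mul, ← star_mul, ← mul_assoc, h.2.1]
  · rw [h.star_mul_star']; exact h.2.2.2
  · rw [h.star_mul_star]; exact h.2.2.1

theorem range_representation (h : IsMPInvStar a x) :
    IsUnit (1 - a * x + star x * x) ∧
      x = star a * (1 - a * x + star x * x) ∧
      a * star a * (1 - a * x + star x * x) = a * x ∧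
      (1 - a * x + star x * x) * (a * star a) = a * x := by
  have hp : a * x * (a * x) = a * x := by rw [← mul_assoc, h.1]
  have hps : a * x * (star x * x) = star x * x := by rw [← mul_assoc, h.symm.mul_mul_star]
  have hsp : star x * x * (a * x) = star x * x := by rw [mul_assoc, ← mul_assoc x, h.2.1]
  have hpt : a * x * (a * star a) = a * star a := by rw [← mul_assoc, h.1]
  have htp : a * star a * (a * x) = a * star a := by
    rw [mul_assoc, ← mul_assoc (star a), h.star_mul_mul]
  have hst : star x * x * (a * star a) = a * x := by
    rw [mul_assoc, ← mul_assoc x, h.mul_mul_star, h.star_mul_star]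
  have hts : a * star a * (star x * x) = a * x := by
    rw [mul_assoc, ← mul_assoc (star a), h.star_mul_star', h.2.1]
  refine ⟨isUnit_one_sub_add_of_corner_inverse hp hps hsp hpt htp hst hts, ?_,
    mul_one_sub_add_of_mul_eq htp hts, one_sub_add_mul_of_mul_eq hpt hst⟩
  rw [mul_add, mul_sub, mul_one, ← mul_assoc, h.star_mul_mul, sub_self, zero_add, ← mul_assoc,
    h.star_mul_star', h.2.1]

end IsMPInvStar

variable {A : Type*} [NormedRing A] [StarRing A] [CStarRing A] [CompleteSpace A]
  [NormedAlgebra ℂ A] [StarModule ℂ A]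

/-- For `a` Moore–Penrose invertible in a unital C*-algebra, with `p = aa†` and
`v = e − p + (a†)*a†`: `v` is invertible, `a† = a*v` and `aa*v = vaa* = p`; with
`q = a†a` and `w = e − q + a†(a†)*`: `w` is invertible, `a† = wa*` and
`wa*a = a*aw = q`. -/
theorem mpInv_star_representation (a ad : A) (had : IsMPInvStar a ad) :
    (IsUnit (1 - a * ad + star ad * ad) ∧
      ad = star a * (1 - a * ad + star ad * ad) ∧
      a * star a * (1 - a * ad + star ad * ad) = a * ad ∧
      (1 - a * ad + star ad * ad) * (a * star a) = a * ad) ∧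
    (IsUnit (1 - ad * a + ad * star ad) ∧
      ad = (1 - ad * a + ad * star ad) * star a ∧
      (1 - ad * a + ad * star ad) * (star a * a) = ad * a ∧
      star a * a * (1 - ad * a + ad * star ad) = ad * a) := by
  obtain ⟨hw, had_eq, hleft, hright⟩ := had.star.range_representation
  simp only [star_star, had.star_mul_star'] at hw had_eq hleft hright
  have hw_sa : IsSelfAdjoint (1 - ad * a + ad * star ad) :=
    ((IsSelfAdjoint.one A).sub had.2.2.2).add (.mul_star_self ad)
  refine ⟨had.range_representation, hw, ?_, hright, hleft⟩
  rw [← hw_sa.star_eq, ← star_mul, ← had_eq, star_star]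
end
end

section
/- Let A be a unital C*-algebra with unit e and let a, b, c ∈ A be such that a has a Moore-Penrose inverse a†, a = bc, b⁻¹(0) = 0, and cA = A. Then the following statements are equivalent: (i) a is EP; (ii) a ∈ c*A ∩ Ab*; (iii) (b*)⁻¹(0) = c⁻¹(0); (iv) bA = c*A; (v) b₋₁(0) = (c*)₋₁(0); (vi) Ac = Ab*; (vii) there exists an invertible x ∈ A with c = xb*; (viii) there exists y ∈ A with y⁻¹(0) = 0 and c = yb*; (ix) there exist z₁, z₂ ∈ A with c = z₁b* and b* = z₂c; (x) there exists v ∈ A with vA = A and b = c*v. -/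
/-!
Write `p = a a†` and `q = a† a`. Cancelling `b` in `a a† a = a` and then using `c A = A` gives
`c (a† b) = 1`, so `b` is left and `c` right invertible. Consequently `b` and `p`, `c*` and `q`
generate the same right ideals, `c` and `q`, `b*` and `p` the same left ideals, and each pair has
the same annihilators. This turns (ii)–(vi) into statements about the projections `p` and `q`,
each equivalent to `p = q`, i.e. to (i). Condition (vi) is a restatement of (ix), and (vii)–(x) are
equivalent because `c` and `b*` are both right invertible.
-/

noncomputable section

variable {A : Type*} [NormedRing A] [StarRing A] [CStarRing A] [CompleteSpace A]
  [NormedAlgebra ℂ A] [StarModule ℂ A]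

section Monoid

variable {M : Type*} [Monoid M] {u v s t : M}

theorem setOf_exists_eq_mul_eq_univ_iff :
    {y | ∃ x, y = u * x} = Set.univ ↔ ∃ x, u * x = 1 := by
  refine ⟨fun h ↦ ?_, fun ⟨x, hx⟩ ↦ Set.eq_univ_of_forall fun y ↦ ⟨x * y, ?_⟩⟩
  · obtain ⟨x, hx⟩ : (1 : M) ∈ {y | ∃ x, y = u * x} := h ▸ Set.mem_univ 1
    exact ⟨x, hx.symm⟩
  · rw [← mul_assoc, hx, one_mul]

theorem setOf_exists_eq_mul_right_eq_iff :
    {y | ∃ x, y = u * x} = {y | ∃ x, y = v * x} ↔ ∃ s t, u = v * s ∧ v = u * t := by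
  refine ⟨fun h ↦ ?_, fun ⟨s, t, hs, ht⟩ ↦ Set.ext fun y ↦ ⟨?_, ?_⟩⟩
  · obtain ⟨s, hs⟩ : u ∈ {y | ∃ x, y = v * x} := h ▸ ⟨1, (mul_one u).symm⟩
    obtain ⟨t, ht⟩ : v ∈ {y | ∃ x, y = u * x} := h.symm ▸ ⟨1, (mul_one v).symm⟩
    exact ⟨s, t, hs, ht⟩
  · rintro ⟨x, rfl⟩
    exact ⟨s * x, by rw [hs, mul_assoc]⟩
  · rintro ⟨x, rfl⟩
    exact ⟨t * x, by rw [ht, mul_assoc]⟩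

theorem setOf_exists_eq_mul_left_eq_iff :
    {y | ∃ x, y = x * u} = {y | ∃ x, y = x * v} ↔ ∃ s t, u = s * v ∧ v = t * u := by
  refine ⟨fun h ↦ ?_, fun ⟨s, t, hs, ht⟩ ↦ Set.ext fun y ↦ ⟨?_, ?_⟩⟩
  · obtain ⟨s, hs⟩ : u ∈ {y | ∃ x, y = x * v} := h ▸ ⟨1, (one_mul u).symm⟩
    obtain ⟨t, ht⟩ : v ∈ {y | ∃ x, y = x * u} := h.symm ▸ ⟨1, (one_mul v).symm⟩
    exact ⟨s, t, hs, ht⟩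
  · rintro ⟨x, rfl⟩
    exact ⟨x * s, by rw [hs, mul_assoc]⟩
  · rintro ⟨x, rfl⟩
    exact ⟨x * t, by rw [ht, mul_assoc]⟩

theorem isUnit_of_eq_mul_of_eq_mul {u' v' : M} (hs : u = s * v) (ht : v = t * u)
    (hu : u * u' = 1) (hv : v * v' = 1) : IsUnit s := by
  refine isUnit_iff_exists.mpr ⟨t, ?_, ?_⟩
  · rw [← mul_one (s * t), ← hu, ← mul_assoc, mul_assoc s, ← ht, ← hs]
  · rw [← mul_one (t * s), ← hv, ← mul_assoc, mul_assoc t, ← hs, ← ht]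

end Monoid

section InnerInverse

variable {M : Type*} [Monoid M] {a d : M}

theorem isIdempotentElem_mul_of_mul_mul_eq (h : a * d * a = a) : IsIdempotentElem (a * d) := by
  rw [IsIdempotentElem, ← mul_assoc, h]

theorem isIdempotentElem_mul_of_mul_mul_eq' (h : a * d * a = a) : IsIdempotentElem (d * a) := by
  rw [IsIdempotentElem, mul_assoc, ← mul_assoc a, h]

theorem mul_eq_mul_iff_exists_eq_mul (h : a * d * a = a) :
    ((∃ x, a = d * a * x) ∧ ∃ y, a = y * (a * d)) ↔ a * d = d * a := by
  refine ⟨fun ⟨⟨x, hx⟩, ⟨y, hy⟩⟩ ↦ ?_,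
    fun hp ↦ ⟨⟨a, by rw [← hp, h]⟩, ⟨a, by rw [hp, ← mul_assoc, h]⟩⟩⟩
  have hqa : d * a * a = a :=
    calc d * a * a = d * a * (d * a * x) := congrArg (d * a * ·) hx
      _ = d * a * x := by rw [← mul_assoc, (isIdempotentElem_mul_of_mul_mul_eq' h).eq]
      _ = a := hx.symm
  have hap : a * (a * d) = a :=
    calc a * (a * d) = y * (a * d) * (a * d) := congrArg (· * (a * d)) hy
      _ = y * (a * d) := by rw [mul_assoc, (isIdempotentElem_mul_of_mul_mul_eq h).eq]
      _ = a := hy.symm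
  calc a * d = d * a * a * d := by rw [hqa]
    _ = d * (a * (a * d)) := by simp only [mul_assoc]
    _ = d * a := by rw [hap]

theorem mul_mul_eq_one_of_isLeftRegular {b c t : M} (h : b * c * d * (b * c) = b * c)
    (hb : IsLeftRegular b) (hc : c * t = 1) : c * (d * b) = 1 := by
  have hcdbc : c * (d * b) * c = c := hb <| by simpa only [mul_assoc] using h
  rw [← mul_one (c * (d * b)), ← hc, ← mul_assoc, hcdbc]

end InnerInverse

section MonoidWithZero

variable {M₀ : Type*} [MonoidWithZero M₀] {u v s t b c d : M₀}

theorem setOf_mul_eq_zero_eq_of_eq_mul_of_eq_mul (hs : u = s * v) (ht : v = t * u) :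
    {y | u * y = 0} = {y | v * y = 0} := by
  ext y
  change u * y = 0 ↔ v * y = 0
  exact ⟨fun h ↦ by rw [ht, mul_assoc, h, mul_zero], fun h ↦ by rw [hs, mul_assoc, h, mul_zero]⟩

theorem setOf_mul_eq_zero_eq_of_eq_mul_of_eq_mul' (hs : u = v * s) (ht : v = u * t) :
    {y | y * u = 0} = {y | y * v = 0} := by
  ext y
  change y * u = 0 ↔ y * v = 0
  exact ⟨fun h ↦ by rw [ht, ← mul_assoc, h, zero_mul], fun h ↦ by rw [hs, ← mul_assoc, h, zero_mul]⟩

theorem setOf_left_factor_eq_of_mul_mul_eq_one (hcdb : c * (d * b) = 1) :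
    {y | ∃ x, y = b * x} = {y | ∃ x, y = b * c * d * x} ∧
      {y | y * b = 0} = {y | y * (b * c * d) = 0} := by
  have hb : b = b * c * d * b := by rw [mul_assoc, mul_assoc, hcdb, mul_one]
  have hp : b * c * d = b * (c * d) := mul_assoc ..
  exact ⟨setOf_exists_eq_mul_right_eq_iff.mpr ⟨b, c * d, hb, hp⟩,
    setOf_mul_eq_zero_eq_of_eq_mul_of_eq_mul' hb hp⟩

theorem setOf_right_factor_eq_of_mul_mul_eq_one (hcdb : c * (d * b) = 1) :
    {y | ∃ x, y = x * c} = {y | ∃ x, y = x * (d * (b * c))} ∧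
      {y | c * y = 0} = {y | d * (b * c) * y = 0} := by
  have hc : c = c * (d * (b * c)) := by rw [← mul_assoc d b c, ← mul_assoc c, hcdb, one_mul]
  have hq : d * (b * c) = d * b * c := (mul_assoc ..).symm
  exact ⟨setOf_exists_eq_mul_left_eq_iff.mpr ⟨c, d * b, hc, hq⟩,
    setOf_mul_eq_zero_eq_of_eq_mul_of_eq_mul hc hq⟩

end MonoidWithZero

theorem setOf_mul_eq_zero_eq_singleton_iff {R : Type*} [NonUnitalNonAssocRing R] {r : R} :
    {x | r * x = 0} = {0} ↔ IsLeftRegular r := by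
  rw [isLeftRegular_iff_right_eq_zero_of_mul, Set.eq_singleton_iff_unique_mem]
  simp

theorem IsSelfAdjoint.mul_eq_right_iff_mul_eq_left {R : Type*} [Mul R] [StarMul R] {p q : R}
    (hp : IsSelfAdjoint p) (hq : IsSelfAdjoint q) : q * p = p ↔ p * q = p := by
  constructor <;> intro h <;> simpa [hp.star_eq, hq.star_eq] using congrArg star h

namespace IsIdempotentElem

variable {R : Type*} [Ring R] {p : R}

theorem setOf_mul_eq_zero (hp : IsIdempotentElem p) :
    {y | p * y = 0} = {y | ∃ x, y = (1 - p) * x} := by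
  ext y
  refine ⟨fun h ↦ ⟨y, by rw [sub_mul, h, one_mul, sub_zero]⟩, ?_⟩
  rintro ⟨x, rfl⟩
  change p * ((1 - p) * x) = 0
  rw [← mul_assoc, hp.mul_one_sub_self, zero_mul]

theorem setOf_mul_eq_zero' (hp : IsIdempotentElem p) :
    {y | y * p = 0} = {y | ∃ x, y = x * (1 - p)} := by
  ext y
  refine ⟨fun h ↦ ⟨y, by rw [mul_sub, h, mul_one, sub_zero]⟩, ?_⟩
  rintro ⟨x, rfl⟩
  change x * (1 - p) * p = 0
  rw [mul_assoc, hp.one_sub_mul_self, mul_zero]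

end IsIdempotentElem

namespace IsStarProjection

variable {R : Type*} [Ring R] [StarRing R] {p q : R}

theorem setOf_exists_eq_mul_right_eq_iff (hp : IsStarProjection p) (hq : IsStarProjection q) :
    {y | ∃ x, y = p * x} = {y | ∃ x, y = q * x} ↔ p = q := by
  refine _root_.setOf_exists_eq_mul_right_eq_iff.trans ⟨fun ⟨s, t, hs, ht⟩ ↦ ?_, fun h ↦ ?_⟩
  · have hqp : q * p = p := by rw [hs, ← mul_assoc, hq.isIdempotentElem.eq]
    have hpq : p * q = q := by rw [ht, ← mul_assoc, hp.isIdempotentElem.eq]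
    rw [← hpq, (hp.isSelfAdjoint.mul_eq_right_iff_mul_eq_left hq.isSelfAdjoint).mp hqp]
  · exact ⟨1, 1, by rw [h, mul_one], by rw [h, mul_one]⟩

theorem setOf_exists_eq_mul_left_eq_iff (hp : IsStarProjection p) (hq : IsStarProjection q) :
    {y | ∃ x, y = x * p} = {y | ∃ x, y = x * q} ↔ p = q := by
  refine _root_.setOf_exists_eq_mul_left_eq_iff.trans ⟨fun ⟨s, t, hs, ht⟩ ↦ ?_, fun h ↦ ?_⟩
  · have hpq : p * q = p := by rw [hs, mul_assoc, hq.isIdempotentElem.eq]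
    have hqp : q * p = q := by rw [ht, mul_assoc, hp.isIdempotentElem.eq]
    rw [← hpq, (hq.isSelfAdjoint.mul_eq_right_iff_mul_eq_left hp.isSelfAdjoint).mpr hqp]
  · exact ⟨1, 1, by rw [h, one_mul], by rw [h, one_mul]⟩

theorem setOf_mul_eq_zero_eq_iff (hp : IsStarProjection p) (hq : IsStarProjection q) :
    {y | p * y = 0} = {y | q * y = 0} ↔ p = q := by
  rw [hp.isIdempotentElem.setOf_mul_eq_zero, hq.isIdempotentElem.setOf_mul_eq_zero,
    hp.one_sub.setOf_exists_eq_mul_right_eq_iff hq.one_sub, sub_right_inj]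

theorem setOf_mul_eq_zero_eq_iff' (hp : IsStarProjection p) (hq : IsStarProjection q) :
    {y | y * p = 0} = {y | y * q = 0} ↔ p = q := by
  rw [hp.isIdempotentElem.setOf_mul_eq_zero', hq.isIdempotentElem.setOf_mul_eq_zero',
    hp.one_sub.setOf_exists_eq_mul_left_eq_iff hq.one_sub, sub_right_inj]

end IsStarProjection

section StarRing

variable {R : Type*} [Ring R] [StarRing R]

theorem tfae_exists_isUnit_eq_mul_star {b c b' c' : R} (hb : b' * b = 1) (hc : c * c' = 1) :
    List.TFAE
      [∃ x : R, IsUnit x ∧ c = x * star b,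
       ∃ y : R, {x : R | y * x = 0} = {0} ∧ c = y * star b,
       ∃ z₁ z₂ : R, c = z₁ * star b ∧ star b = z₂ * c,
       ∃ v : R, {y : R | ∃ x, y = v * x} = Set.univ ∧ b = star c * v] := by
  tfae_have 1 → 2 := fun ⟨x, hx, hcx⟩ ↦
    ⟨x, setOf_mul_eq_zero_eq_singleton_iff.mpr hx.isRegular.left, hcx⟩
  tfae_have 2 → 1 := by
    rintro ⟨y, hy, hcy⟩
    have hy' : y * (star b * c') = 1 := by rw [← mul_assoc, ← hcy, hc]
    exact ⟨y, isUnit_iff_exists.mpr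
      ⟨_, hy', (setOf_mul_eq_zero_eq_singleton_iff.mp hy).mul_eq_one_symm hy'⟩, hcy⟩
  tfae_have 1 → 3 := by
    rintro ⟨_, ⟨u, rfl⟩, hcu⟩
    exact ⟨u, ↑u⁻¹, hcu, by rw [hcu, Units.inv_mul_cancel_left]⟩
  tfae_have 3 → 1 := fun ⟨z₁, z₂, h₁, h₂⟩ ↦
    ⟨z₁, isUnit_of_eq_mul_of_eq_mul h₁ h₂ hc (by rw [← star_mul, hb, star_one]), h₁⟩
  tfae_have 1 → 4 := by
    rintro ⟨_, ⟨u, rfl⟩, hcu⟩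
    refine ⟨star ↑u⁻¹, setOf_exists_eq_mul_eq_univ_iff.mpr ⟨star ↑u, ?_⟩, ?_⟩
    · rw [← star_mul, Units.mul_inv, star_one]
    · rw [hcu, star_mul, star_star, mul_assoc, ← star_mul, Units.inv_mul, star_one, mul_one]
  tfae_have 4 → 3 := by
    rintro ⟨v, hv, hbv⟩
    obtain ⟨w, hw⟩ := setOf_exists_eq_mul_eq_univ_iff.mp hv
    refine ⟨star w, star v, ?_, by rw [hbv, star_mul, star_star]⟩
    rw [← star_mul, hbv, mul_assoc, hw, mul_one, star_star]
  tfae_finish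

namespace IsMPInvStar

variable {a b c d : R}

theorem isStarProjection_mul (h : IsMPInvStar a d) : IsStarProjection (a * d) :=
  ⟨isIdempotentElem_mul_of_mul_mul_eq h.1, h.2.2.1⟩

theorem isStarProjection_mul' (h : IsMPInvStar a d) : IsStarProjection (d * a) :=
  ⟨isIdempotentElem_mul_of_mul_mul_eq' h.1, h.2.2.2⟩

theorem setOf_star_left_factor_eq (h : IsMPInvStar (b * c) d) (hcdb : c * (d * b) = 1) :
    {y | ∃ x, y = x * star b} = {y | ∃ x, y = x * (b * c * d)} ∧
      {y | star b * y = 0} = {y | b * c * d * y = 0} := by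
  have hb : star b = star b * (b * c * d) := by
    rw [← h.2.2.1.star_eq, ← star_mul, mul_assoc, mul_assoc, hcdb, mul_one]
  have hp : b * c * d = star d * star c * star b := by
    rw [← h.2.2.1.star_eq, star_mul, star_mul, mul_assoc]
  exact ⟨setOf_exists_eq_mul_left_eq_iff.mpr ⟨star b, star d * star c, hb, hp⟩,
    setOf_mul_eq_zero_eq_of_eq_mul_of_eq_mul hb hp⟩

theorem setOf_star_right_factor_eq (h : IsMPInvStar (b * c) d) (hcdb : c * (d * b) = 1) :
    {y | ∃ x, y = star c * x} = {y | ∃ x, y = d * (b * c) * x} ∧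
      {y | y * star c = 0} = {y | y * (d * (b * c)) = 0} := by
  have hc : star c = d * (b * c) * star c := by
    rw [← h.2.2.2.star_eq, ← star_mul, ← mul_assoc d b c, ← mul_assoc c, hcdb, one_mul]
  have hq : d * (b * c) = star c * (star b * star d) := by
    rw [← h.2.2.2.star_eq, star_mul, star_mul, mul_assoc]
  exact ⟨setOf_exists_eq_mul_right_eq_iff.mpr ⟨star c, star b * star d, hc, hq⟩,
    setOf_mul_eq_zero_eq_of_eq_mul_of_eq_mul' hc hq⟩

end IsMPInvStar

end StarRing

/-- If `a = bc` with `b⁻¹(0) = 0`, `cA = A` and `a†` exists in a unital C*-algebra, then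
`a` is EP iff any of the displayed conditions involving `b*` and `c*` holds. -/
theorem ep_tfae_star_factorization (a b c ad : A) (had : IsMPInvStar a ad)
    (habc : a = b * c)
    (hb : {x : A | b * x = 0} = {0}) (hc : {y : A | ∃ x, y = c * x} = Set.univ) :
    List.TFAE
      [a * ad = ad * a,
       (∃ x : A, a = star c * x) ∧ (∃ y : A, a = y * star b),
       {x : A | star b * x = 0} = {x : A | c * x = 0},
       {y : A | ∃ x, y = b * x} = {y : A | ∃ x, y = star c * x},
       {x : A | x * b = 0} = {x : A | x * star c = 0},
       {y : A | ∃ x, y = x * c} = {y : A | ∃ x, y = x * star b},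
       ∃ x : A, IsUnit x ∧ c = x * star b,
       ∃ y : A, {x : A | y * x = 0} = {0} ∧ c = y * star b,
       ∃ z₁ z₂ : A, c = z₁ * star b ∧ star b = z₂ * c,
       ∃ v : A, {y : A | ∃ x, y = v * x} = Set.univ ∧ b = star c * v] := by
  subst habc
  obtain ⟨t, ht⟩ := setOf_exists_eq_mul_eq_univ_iff.mp hc
  have hcdb : c * (ad * b) = 1 :=
    mul_mul_eq_one_of_isLeftRegular had.1 (setOf_mul_eq_zero_eq_singleton_iff.mp hb) ht
  have hp := had.isStarProjection_mul
  have hq := had.isStarProjection_mul'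
  obtain ⟨hbA, hb_ann⟩ := setOf_left_factor_eq_of_mul_mul_eq_one hcdb
  obtain ⟨hAc, hc_ker⟩ := setOf_right_factor_eq_of_mul_mul_eq_one hcdb
  obtain ⟨hAb', hb'_ker⟩ := had.setOf_star_left_factor_eq hcdb
  obtain ⟨hc'A, hc'_ann⟩ := had.setOf_star_right_factor_eq hcdb
  have hunit := tfae_exists_isUnit_eq_mul_star (b' := c * ad) (by rw [mul_assoc, hcdb]) hcdb
  tfae_have 1 ↔ 2 :=
    (mul_eq_mul_iff_exists_eq_mul had.1).symm.trans
      (and_congr (Set.ext_iff.mp hc'A _) (Set.ext_iff.mp hAb' _)).symm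
  tfae_have 1 ↔ 3 := by rw [hb'_ker, hc_ker, hp.setOf_mul_eq_zero_eq_iff hq]
  tfae_have 1 ↔ 4 := by rw [hbA, hc'A, hp.setOf_exists_eq_mul_right_eq_iff hq]
  tfae_have 1 ↔ 5 := by rw [hb_ann, hc'_ann, hp.setOf_mul_eq_zero_eq_iff' hq]
  tfae_have 1 ↔ 6 := by rw [hAc, hAb', hq.setOf_exists_eq_mul_left_eq_iff hp, eq_comm]
  tfae_have 6 ↔ 9 := setOf_exists_eq_mul_left_eq_iff
  tfae_have 9 ↔ 7 := hunit.out 2 0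
  tfae_have 7 ↔ 8 := hunit.out 0 1
  tfae_have 7 ↔ 10 := hunit.out 0 3
  tfae_finish
end
end
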